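/- If a tensor C ∈ ℂ^{M×M×N} has slice-rank r in the third direction, meaning there exist matrices G₁,…,G_r and coefficients c_{k,d} such that C[·,·,k] = Σ_{d=1}^r c_{k,d} G_d for all k, and if at each step the 3D-ACA pivot is nonzero whenever the residual tensor is nonzero, then the 3D-ACA terminates with exact reconstruction after at most r steps applied to the span: each step reduces the dimension of the span of the residual slices {(C − C^{(ℓ)})[·,·,k] : k = 1..N} by at least one. -/

import Mathlib

open Module Submodule

theorem finrank_span_range_le_card_of_mem_span {K V ι κ : Type*} [DivisionRing K]
    [AddCommGroup V] [Module K V] [Fintype κ] (v : ι → V) (G : κ → V)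
    (hv : ∀ k, v k ∈ span K (Set.range G)) :
    finrank K (span K (Set.range v)) ≤ Fintype.card κ :=
  have : FiniteDimensional K (span K (Set.range G)) :=
    FiniteDimensional.span_of_finite K (Set.finite_range G)
  (Submodule.finrank_mono (span_le.2 (Set.range_subset_iff.2 hv))).trans
    (finrank_range_le_card G)

/-- Subtracting from each vector `E k` its multiple of the pivot vector `E k₀` that kills the
coordinate `φ` leaves a family whose span lies in `ker φ`, hence misses `E k₀`. -/
theorem finrank_span_range_sub_smul_pivot_lt {K V ι : Type*} [Field K] [AddCommGroup V]
    [Module K V] [Finite ι] (E : ι → V) (φ : V →ₗ[K] K) (k₀ : ι) (hpiv : φ (E k₀) ≠ 0) :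
    finrank K (span K (Set.range fun k => E k - (φ (E k) / φ (E k₀)) • E k₀)) <
      finrank K (span K (Set.range E)) := by
  set F := fun k => E k - (φ (E k) / φ (E k₀)) • E k₀
  have hpiv_mem : E k₀ ∈ span K (Set.range E) := subset_span ⟨k₀, rfl⟩
  have hF_le : span K (Set.range F) ≤ span K (Set.range E) :=
    span_le.2 <| Set.range_subset_iff.2 fun k =>
      sub_mem (subset_span ⟨k, rfl⟩) (smul_mem _ _ hpiv_mem)
  have hF_ker : span K (Set.range F) ≤ LinearMap.ker φ :=
    span_le.2 <| Set.range_subset_iff.2 fun k => by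
      simp [F, div_mul_cancel₀ _ hpiv]
  have : FiniteDimensional K (span K (Set.range E)) :=
    FiniteDimensional.span_of_finite K (Set.finite_range E)
  exact Submodule.finrank_lt_finrank_of_lt <| SetLike.lt_iff_le_and_exists.2
    ⟨hF_le, E k₀, hpiv_mem, fun h => hpiv (hF_ker h)⟩

/-- Finite termination of 3D-ACA in at most slice-rank many steps: if the slices of `C` lie in
the span of `r` matrices, then the span of the slices of `C` has dimension at most `r`; and each
3D-ACA step with nonzero pivot strictly reduces (by at least one) the dimension of the span of
the residual slices. -/
theorem stmt_17 (M N r : ℕ) (C : Fin M → Fin M → Fin N → ℂ)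
    (G : Fin r → (Fin M → Fin M → ℂ)) (coef : Fin N → Fin r → ℂ)
    (hrank : ∀ k i j, C i j k = ∑ d : Fin r, coef k d * G d i j)
    (Cprev : Fin M → Fin M → Fin N → ℂ)
    (kℓ : Fin N) (iℓ jℓ : Fin M)
    (hpiv : C iℓ jℓ kℓ - Cprev iℓ jℓ kℓ ≠ 0)
    (fℓ : Fin N → ℂ)
    (hf : ∀ k, fℓ k = (C iℓ jℓ k - Cprev iℓ jℓ k) / (C iℓ jℓ kℓ - Cprev iℓ jℓ kℓ))
    (Cnew : Fin M → Fin M → Fin N → ℂ)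
    (hnew : ∀ i j k, Cnew i j k = Cprev i j k + (C i j kℓ - Cprev i j kℓ) * fℓ k) :
    Module.finrank ℂ
        (Submodule.span ℂ (Set.range (fun k : Fin N => fun i j => C i j k))) ≤ r ∧
    Module.finrank ℂ
        (Submodule.span ℂ (Set.range (fun k : Fin N => fun i j => C i j k - Cnew i j k))) + 1
      ≤ Module.finrank ℂ
          (Submodule.span ℂ (Set.range (fun k : Fin N => fun i j => C i j k - Cprev i j k))) := by
  constructor
  · refine (finrank_span_range_le_card_of_mem_span _ G fun k => ?_).trans_eq (Fintype.card_fin r)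
    refine (mem_span_range_iff_exists_fun ℂ).2 ⟨coef k, ?_⟩
    ext i j
    simp [hrank k i j, Finset.sum_apply]
  · let eval : (Fin M → Fin M → ℂ) →ₗ[ℂ] ℂ := LinearMap.proj jℓ ∘ₗ LinearMap.proj iℓ
    have hresidual : (fun k : Fin N => fun i j => C i j k - Cnew i j k) =
        fun k => (fun i j => C i j k - Cprev i j k) -
          (eval (fun i j => C i j k - Cprev i j k) /
            eval (fun i j => C i j kℓ - Cprev i j kℓ)) • fun i j => C i j kℓ - Cprev i j kℓ := by
      ext k i j
      simp only [eval, LinearMap.comp_apply, LinearMap.proj_apply, Pi.sub_apply,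
        Pi.smul_apply, smul_eq_mul, hnew, hf]
      ring
    rw [hresidual]
    exact finrank_span_range_sub_smul_pivot_lt _ eval kℓ hpiv
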